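/- Let H and K be n×n complex Hermitian matrices with n ≥ 2, and set A = H + iK. If H is positive definite, then det H ≤ det H + |det K| ≤ |det A|. -/

import Mathlib

open Matrix Complex
open scoped ComplexOrder

/-!
Write `H = S²` with `S = √H` Hermitian. Then `K = S M S` and `A = S (1 + iM) S` with
`M = S⁻¹ K S⁻¹` Hermitian, so if `μ` are the eigenvalues of `M`,
`|det K| = det H · ∏ |μⱼ|` and `|det A| = det H · ∏ √(1 + μⱼ²)`. The theorem reduces to the
elementary inequality `1 + ∏ aⱼ ≤ ∏ √(1 + aⱼ²)` for `n ≥ 2` nonnegative reals, which follows by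
induction from the Cauchy–Schwarz inequality `(1 + ab)² ≤ (1 + a²)(1 + b²)`.
-/

theorem Finset.one_add_prod_le_prod_one_add {ι R : Type*} [CommSemiring R] [PartialOrder R]
    [IsOrderedRing R] {s : Finset ι} (hs : s.Nonempty) {b : ι → R} (hb : ∀ i ∈ s, 0 ≤ b i) :
    1 + ∏ i ∈ s, b i ≤ ∏ i ∈ s, (1 + b i) := by
  induction hs using Finset.Nonempty.cons_induction with
  | singleton => simp
  | cons x t hx ht ih =>
    rw [Finset.forall_mem_cons] at hb
    rw [Finset.prod_cons, Finset.prod_cons]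
    calc 1 + b x * ∏ i ∈ t, b i
        ≤ 1 + b x * ∏ i ∈ t, b i + (b x + ∏ i ∈ t, b i) :=
          le_add_of_nonneg_right (add_nonneg hb.1 (Finset.prod_nonneg hb.2))
      _ = (1 + b x) * (1 + ∏ i ∈ t, b i) := by ring
      _ ≤ (1 + b x) * ∏ i ∈ t, (1 + b i) :=
          mul_le_mul_of_nonneg_left (ih hb.2) (add_nonneg zero_le_one hb.1)

theorem Finset.sq_one_add_prod_le_prod_one_add_sq {ι R : Type*} [CommRing R] [LinearOrder R]
    [IsStrictOrderedRing R] {s : Finset ι} (hs : 1 < s.card) (a : ι → R) :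
    (1 + ∏ i ∈ s, a i) ^ 2 ≤ ∏ i ∈ s, (1 + a i ^ 2) := by
  classical
  obtain ⟨x, hx⟩ := Finset.card_pos.mp (zero_lt_one.trans hs)
  have hrest : (s.erase x).Nonempty :=
    Finset.card_pos.mp (by rw [Finset.card_erase_of_mem hx]; omega)
  rw [← Finset.mul_prod_erase s _ hx, ← Finset.mul_prod_erase s _ hx]
  set P := ∏ i ∈ s.erase x, a i
  have hP : 1 + P ^ 2 ≤ ∏ i ∈ s.erase x, (1 + a i ^ 2) := by
    simpa only [P, Finset.prod_pow] using
      Finset.one_add_prod_le_prod_one_add hrest fun i _ => sq_nonneg (a i)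
  have cauchy_schwarz : (1 + a x * P) ^ 2 ≤ (1 + a x ^ 2) * (1 + P ^ 2) := by
    nlinarith [sq_nonneg (a x - P)]
  exact cauchy_schwarz.trans (mul_le_mul_of_nonneg_left hP (by positivity))

theorem Finset.one_add_prod_abs_le_prod_sqrt {ι : Type*} {s : Finset ι} (hs : 1 < s.card)
    (a : ι → ℝ) : 1 + ∏ i ∈ s, |a i| ≤ ∏ i ∈ s, √(1 + a i ^ 2) := by
  rw [← Real.sqrt_prod _ fun i _ => by positivity]
  apply Real.le_sqrt_of_sq_le
  simpa only [sq_abs] using Finset.sq_one_add_prod_le_prod_one_add_sq hs fun i => |a i|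

theorem Complex.norm_one_add_I_mul_ofReal (x : ℝ) : ‖1 + I * x‖ = √(1 + x ^ 2) := by
  rw [mul_comm, ← ofReal_one, norm_add_mul_I, one_pow]

theorem Matrix.IsHermitian.det_one_add_smul {n 𝕜 : Type*} [Fintype n] [DecidableEq n] [RCLike 𝕜]
    {M : Matrix n n 𝕜} (hM : M.IsHermitian) (z : 𝕜) :
    (1 + z • M).det = ∏ i, (1 + z * hM.eigenvalues i) := by
  have hdiag : 1 + z • M = Unitary.conjStarAlgAut 𝕜 _ hM.eigenvectorUnitary
      (diagonal fun i => 1 + z * hM.eigenvalues i) := by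
    conv_lhs => rw [hM.spectral_theorem]
    rw [← map_smul, ← map_one (Unitary.conjStarAlgAut 𝕜 _ hM.eigenvectorUnitary), ← map_add,
      ← diagonal_one, ← diagonal_smul, ← diagonal_add]
    rfl
  rw [hdiag, Unitary.conjStarAlgAut_apply, det_mul_right_comm, ← Unitary.coe_star,
    Unitary.coe_mul_star_self, one_mul, det_diagonal]

open scoped MatrixOrder in
theorem Matrix.PosDef.exists_isHermitian_congr {n : Type*} [Fintype n] [DecidableEq n]
    {H K : Matrix n n ℂ} (hH : H.PosDef) (hK : K.IsHermitian) :
    ∃ S M : Matrix n n ℂ, S * S = H ∧ M.IsHermitian ∧ K = S * M * S := by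
  have hSS : CFC.sqrt H * CFC.sqrt H = H := CFC.sqrt_mul_sqrt_self H hH.posSemidef.nonneg
  have hS : (CFC.sqrt H).IsHermitian := (CFC.sqrt_nonneg H).posSemidef.isHermitian
  have hSunit : IsUnit (CFC.sqrt H).det :=
    isUnit_of_mul_isUnit_left (by rw [← det_mul, hSS]; exact hH.det_pos.ne'.isUnit)
  refine ⟨CFC.sqrt H, (CFC.sqrt H)⁻¹ * K * (CFC.sqrt H)⁻¹, hSS, ?_, ?_⟩
  · rw [IsHermitian, conjTranspose_mul, conjTranspose_mul, conjTranspose_nonsing_inv, hS.eq,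
      hK.eq, Matrix.mul_assoc]
  · rw [Matrix.mul_assoc, Matrix.mul_assoc, nonsing_inv_mul _ hSunit, Matrix.mul_one,
      mul_nonsing_inv_cancel_left _ _ hSunit]

theorem Matrix.det_mul_mul_of_mul_self_eq {n R : Type*} [Fintype n] [DecidableEq n] [CommRing R]
    {S H : Matrix n n R} (hS : S * S = H) (X : Matrix n n R) :
    (S * X * S).det = H.det * X.det := by
  rw [← hS, det_mul, det_mul, det_mul]
  ring

theorem ostrowski_taussky_general {n : ℕ} (hn : 2 ≤ n)
    (H K : Matrix (Fin n) (Fin n) ℂ)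
    (hK : K.IsHermitian) (hHpd : H.PosDef)
    (A : Matrix (Fin n) (Fin n) ℂ) (hA : A = H + Complex.I • K) :
    H.det.re ≤ H.det.re + ‖K.det‖ ∧
      H.det.re + ‖K.det‖ ≤ ‖A.det‖ := by
  obtain ⟨S, M, hS, hM, rfl⟩ := hHpd.exists_isHermitian_congr hK
  have hA' : A = S * (1 + I • M) * S := by
    rw [hA, mul_add, add_mul, mul_one, hS, Matrix.mul_smul, Matrix.smul_mul]
  have hdetH : ‖H.det‖ = H.det.re := by
    rw [eq_coe_norm_of_nonneg hHpd.det_pos.le]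
    simp
  have hdetK : ‖(S * M * S).det‖ = H.det.re * ∏ i, |hM.eigenvalues i| := by
    simp [det_mul_mul_of_mul_self_eq hS, hM.det_eq_prod_eigenvalues, hdetH]
  have hdetA : ‖A.det‖ = H.det.re * ∏ i, √(1 + hM.eigenvalues i ^ 2) := by
    simp [hA', det_mul_mul_of_mul_self_eq hS, hM.det_one_add_smul, hdetH,
      norm_one_add_I_mul_ofReal]
  refine ⟨le_add_of_nonneg_right (norm_nonneg _), ?_⟩
  rw [hdetK, hdetA, ← mul_one_add]
  gcongr
  · exact hdetH ▸ norm_nonneg _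
  · refine Finset.one_add_prod_abs_le_prod_sqrt ?_ _
    rwa [Finset.card_univ, Fintype.card_fin]

/-- Ostrowski–Taussky inequality: for `n × n` Hermitian complex matrices `H, K`
with `n ≥ 2` and `A = H + iK`, if `H` is positive definite then
`det H ≤ det H + |det K| ≤ |det A|`. -/
theorem ostrowski_taussky {n : ℕ} (hn : 2 ≤ n)
    (H K : Matrix (Fin n) (Fin n) ℂ)
    (hH : H.IsHermitian) (hK : K.IsHermitian) (hHpd : H.PosDef)
    (A : Matrix (Fin n) (Fin n) ℂ) (hA : A = H + Complex.I • K) :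
    H.det.re ≤ H.det.re + ‖K.det‖ ∧
      H.det.re + ‖K.det‖ ≤ ‖A.det‖ :=
  ostrowski_taussky_general hn H K hK hHpd A hA
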